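/- Let α ∈ [0,1), let s ≥ 1 be an integer, and set n = s + ⌊3s/2⌋ + 2. Then the A_α-spectral radius of G = K_s ∨ ((⌊3s/2⌋+2)K₁) equals the largest real root of x² − (αn + s − 1)x + (2α−1)s⌊3s/2⌋ + αs² + (3α−2)s = 0; equivalently, ρ_α(G) = (αn + s − 1 + √((αn+s−1)² − 4((2α−1)s⌊3s/2⌋ + αs² + 3αs − 2s)))/2. -/

import Mathlib

open Finset

/-- The join `G ∨g H` of two graphs: the disjoint union together with all edges
between the two parts. -/
def SimpleGraph.gjoin {α β : Type*} (G : SimpleGraph α) (H : SimpleGraph β) :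
    SimpleGraph (α ⊕ β) where
  Adj u v := match u, v with
    | Sum.inl u, Sum.inl v => G.Adj u v
    | Sum.inr u, Sum.inr v => H.Adj u v
    | _, _ => True
  symm := ⟨fun u v => match u, v with
    | Sum.inl u, Sum.inl v => G.adj_symm
    | Sum.inr u, Sum.inr v => H.adj_symm
    | Sum.inl _, Sum.inr _ | Sum.inr _, Sum.inl _ => fun _ => trivial⟩
  loopless := ⟨fun u => by cases u <;> simp⟩

infixl:60 " ∨g " => SimpleGraph.gjoin

/-- The `A_α`-matrix `α • D(G) + (1-α) • A(G)` of a graph `G`. -/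
noncomputable def aAlphaMatrix {V : Type*} [Fintype V] [DecidableEq V]
    (α : ℝ) (G : SimpleGraph V) : Matrix V V ℝ := by
  classical
  exact α • Matrix.diagonal (fun v => (G.degree v : ℝ)) + (1 - α) • G.adjMatrix ℝ

/-- The `A_α`-spectral radius `ρ_α(G)`: the largest eigenvalue of `A_α(G)`. -/
noncomputable def rhoAlpha {V : Type*} [Fintype V] [DecidableEq V]
    (α : ℝ) (G : SimpleGraph V) : ℝ :=
  sSup (spectrum ℝ (aAlphaMatrix α G))

/-- The signless Laplacian matrix `Q(G) = D(G) + A(G)`. -/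
noncomputable def signlessLaplacian {V : Type*} [Fintype V] [DecidableEq V]
    (G : SimpleGraph V) : Matrix V V ℝ := by
  classical
  exact Matrix.diagonal (fun v => (G.degree v : ℝ)) + G.adjMatrix ℝ

/-- `q(G)`: the largest eigenvalue of the signless Laplacian matrix of `G`. -/
noncomputable def qIndex {V : Type*} [Fintype V] [DecidableEq V]
    (G : SimpleGraph V) : ℝ :=
  sSup (spectrum ℝ (signlessLaplacian G))

/-- The number of edges (the size) of a graph. -/
noncomputable def edgeCount {V : Type*} [Fintype V] [DecidableEq V]
    (G : SimpleGraph V) : ℕ := by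
  classical
  exact G.edgeFinset.card

/-- `i(G - S)`: the number of isolated vertices of the graph obtained from `G`
by deleting the vertices of `S` together with all edges incident to `S`. -/
noncomputable def isolGminus {V : Type*} [Fintype V] [DecidableEq V]
    (G : SimpleGraph V) (S : Finset V) : ℕ := by
  classical
  exact (Finset.univ.filter (fun v => v ∉ S ∧ ∀ u, G.Adj v u → u ∈ S)).card

/-- `F(n)`: the edge bound from Theorem 1.1. -/
def Fbound (n : ℕ) : ℕ :=
  if n = 6 then 9 else if n = 8 then 18 else (n - 2).choose 2 + 2

/-- `f(α)`: the order bound from Theorem 1.2. -/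
noncomputable def fAlpha (α : ℝ) : ℝ :=
  if α ≤ 1 / 2 then 20 else if α ≤ 5 / 7 then 25 else 7 / (1 - α) + 3

/-! On `K_s ∨ tK₁` the eigen-equations of `A_α` for an eigenpair `(μ, x)` only involve the part
sums `a = ∑ x(inl)` and `b = ∑ x(inr)`:
`(μ - (α(s+t) - 1)) x_v = (1-α)(a+b)` on `K_s` and `(μ - αs) x_w = (1-α)a` on `tK₁`.
Summing them gives the quotient system, whose characteristic polynomial is
`Q(μ) = (μ - (αt+s-1))(μ - αs) - (1-α)²st`. Hence either `Q(μ) = 0`, or `a = b = 0` and then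
`μ ∈ {α(s+t) - 1, αs}`, where `Q` is `≤ 0` as soon as `t ≥ 1`. So every eigenvalue satisfies
`Q(μ) ≤ 0`, while the larger root of `Q` is the eigenvalue of an eigenvector that is constant on
each part. For `t = ⌊3s/2⌋ + 2` the coefficients of `Q` are those of the statement. -/

open Matrix

theorem Matrix.mem_spectrum_iff_exists_mulVec_eq_smul {K n : Type*} [Field K] [Fintype n]
    [DecidableEq n] {A : Matrix n n K} {μ : K} :
    μ ∈ spectrum K A ↔ ∃ v, v ≠ 0 ∧ A *ᵥ v = μ • v := by
  rw [← spectrum_toLin', ← Module.End.hasEigenvalue_iff_mem_spectrum]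
  constructor
  · intro h
    obtain ⟨v, hv⟩ := h.exists_hasEigenvector
    exact ⟨v, hv.2, by simpa using hv.apply_eq_smul⟩
  · rintro ⟨v, hv, hAv⟩
    exact Module.End.hasEigenvalue_of_hasEigenvector
      ⟨Module.End.mem_eigenspace_iff.mpr (by simpa using hAv), hv⟩

noncomputable def largestRoot (B C : ℝ) : ℝ := (B + √(B ^ 2 - 4 * C)) / 2

section LargestRoot

variable {B C : ℝ}

theorem largestRoot_isRoot (hD : 0 ≤ B ^ 2 - 4 * C) :
    largestRoot B C ^ 2 - B * largestRoot B C + C = 0 := by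
  unfold largestRoot
  linear_combination (1 / 4 : ℝ) * Real.sq_sqrt hD

theorem le_largestRoot {x : ℝ} (hx : x ^ 2 - B * x + C ≤ 0) : x ≤ largestRoot B C := by
  have h : |2 * x - B| ≤ √(B ^ 2 - 4 * C) := Real.abs_le_sqrt (by nlinarith)
  unfold largestRoot
  linarith [(abs_le.mp h).2]

theorem isGreatest_largestRoot (hD : 0 ≤ B ^ 2 - 4 * C) :
    IsGreatest {x | x ^ 2 - B * x + C = 0} (largestRoot B C) :=
  ⟨largestRoot_isRoot hD, fun _ hx => le_largestRoot hx.le⟩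

end LargestRoot

namespace SimpleGraph

section Join

variable {V W : Type*} (G : SimpleGraph V) (H : SimpleGraph W)

instance [DecidableRel G.Adj] [DecidableRel H.Adj] : DecidableRel (G ∨g H).Adj
  | .inl v, .inl v' => inferInstanceAs (Decidable (G.Adj v v'))
  | .inr w, .inr w' => inferInstanceAs (Decidable (H.Adj w w'))
  | .inl _, .inr _ | .inr _, .inl _ => .isTrue trivial

theorem adjMatrix_gjoin {R : Type*} [Zero R] [One R] [DecidableRel G.Adj] [DecidableRel H.Adj] :
    (G ∨g H).adjMatrix R =
      fromBlocks (G.adjMatrix R) (of fun _ _ => 1) (of fun _ _ => 1) (H.adjMatrix R) := by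
  ext (v | w) (v' | w') <;> rfl

end Join

section CompleteSplit

variable {V W : Type*} [Fintype V] [DecidableEq V] [Fintype W]

theorem adjMatrix_top_mulVec_apply (x : V → ℝ) (v : V) :
    ((⊤ : SimpleGraph V).adjMatrix ℝ *ᵥ x) v = ∑ u, x u - x v := by
  simp [mulVec, dotProduct, ite_mul, Finset.sum_ite, Finset.filter_ne]

theorem adjMatrix_top_gjoin_bot_mulVec_inl (x : V ⊕ W → ℝ) (v : V) :
    (((⊤ : SimpleGraph V) ∨g (⊥ : SimpleGraph W)).adjMatrix ℝ *ᵥ x) (.inl v) =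
      ∑ u, x (.inl u) - x (.inl v) + ∑ w, x (.inr w) := by
  rw [adjMatrix_gjoin, fromBlocks_mulVec, Sum.elim_inl, Pi.add_apply, adjMatrix_top_mulVec_apply]
  simp [mulVec, dotProduct]

theorem adjMatrix_top_gjoin_bot_mulVec_inr (x : V ⊕ W → ℝ) (w : W) :
    (((⊤ : SimpleGraph V) ∨g (⊥ : SimpleGraph W)).adjMatrix ℝ *ᵥ x) (.inr w) =
      ∑ u, x (.inl u) := by
  rw [adjMatrix_gjoin, fromBlocks_mulVec]
  simp [mulVec, dotProduct]

theorem degree_top_gjoin_bot_inl (v : V) :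
    (((⊤ : SimpleGraph V) ∨g (⊥ : SimpleGraph W)).degree (.inl v) : ℝ) =
      Fintype.card V + Fintype.card W - 1 := by
  simpa [add_sub_right_comm] using adjMatrix_top_gjoin_bot_mulVec_inl (fun _ => (1 : ℝ)) v

theorem degree_top_gjoin_bot_inr (w : W) :
    (((⊤ : SimpleGraph V) ∨g (⊥ : SimpleGraph W)).degree (.inr w) : ℝ) = Fintype.card V := by
  simpa using adjMatrix_top_gjoin_bot_mulVec_inr (fun _ => (1 : ℝ)) w

end CompleteSplit

end SimpleGraph

open SimpleGraph

theorem aAlphaMatrix_eq {V : Type*} [Fintype V] [DecidableEq V] (α : ℝ) (G : SimpleGraph V)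
    [DecidableRel G.Adj] :
    aAlphaMatrix α G = α • diagonal (fun v => (G.degree v : ℝ)) + (1 - α) • G.adjMatrix ℝ := by
  unfold aAlphaMatrix
  congr!

theorem aAlphaMatrix_mulVec_apply {V : Type*} [Fintype V] [DecidableEq V] (α : ℝ)
    (G : SimpleGraph V) [DecidableRel G.Adj] (x : V → ℝ) (v : V) :
    (aAlphaMatrix α G *ᵥ x) v = α * G.degree v * x v + (1 - α) * (G.adjMatrix ℝ *ᵥ x) v := by
  simp [aAlphaMatrix_eq, add_mulVec, smul_mulVec, mulVec_diagonal, mul_assoc]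

/- Trace and determinant of the quotient matrix `!![α * t + s - 1, (1 - α) * t; (1 - α) * s, α * s]`
of `A_α(K_s ∨ tK₁)` with respect to its two parts. -/

def quotientTrace (α s t : ℝ) : ℝ := α * (s + t) + s - 1

def quotientDet (α s t : ℝ) : ℝ := α * s * (α * t + s - 1) - (1 - α) ^ 2 * s * t

theorem quotient_discrim_nonneg (α s t : ℝ) (hst : 0 ≤ s * t) :
    0 ≤ quotientTrace α s t ^ 2 - 4 * quotientDet α s t := by
  unfold quotientTrace quotientDet
  nlinarith [sq_nonneg (α * t + s - 1 - α * s), mul_nonneg (sq_nonneg (1 - α)) hst]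

section Spectrum

open Fintype

variable {V W : Type*} [Fintype V] [DecidableEq V] [Fintype W] [DecidableEq W] {α : ℝ}

local notation "Tr" => quotientTrace α (card V) (card W)
local notation "Det" => quotientDet α (card V) (card W)

theorem aAlphaMatrix_top_gjoin_bot_mulVec_inl (x : V ⊕ W → ℝ) (v : V) :
    (aAlphaMatrix α ((⊤ : SimpleGraph V) ∨g (⊥ : SimpleGraph W)) *ᵥ x) (.inl v) =
      (α * (card V + card W) - 1) * x (.inl v) + (1 - α) * (∑ u, x (.inl u) + ∑ w, x (.inr w)) := by
  rw [aAlphaMatrix_mulVec_apply, degree_top_gjoin_bot_inl, adjMatrix_top_gjoin_bot_mulVec_inl]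
  ring

theorem aAlphaMatrix_top_gjoin_bot_mulVec_inr (x : V ⊕ W → ℝ) (w : W) :
    (aAlphaMatrix α ((⊤ : SimpleGraph V) ∨g (⊥ : SimpleGraph W)) *ᵥ x) (.inr w) =
      α * card V * x (.inr w) + (1 - α) * ∑ u, x (.inl u) := by
  rw [aAlphaMatrix_mulVec_apply, degree_top_gjoin_bot_inr, adjMatrix_top_gjoin_bot_mulVec_inr]

theorem mem_spectrum_aAlphaMatrix_top_gjoin_bot [Nonempty V] [Nonempty W] (hα : α ≠ 1) {r : ℝ}
    (hr : r ^ 2 - Tr * r + Det = 0) :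
    r ∈ spectrum ℝ (aAlphaMatrix α ((⊤ : SimpleGraph V) ∨g (⊥ : SimpleGraph W))) := by
  have hs : (card V : ℝ) ≠ 0 := Nat.cast_ne_zero.mpr card_ne_zero
  unfold quotientTrace quotientDet at hr
  refine Matrix.mem_spectrum_iff_exists_mulVec_eq_smul.mpr
    ⟨Sum.elim (fun _ => r - α * card V) (fun _ => (1 - α) * card V), ?_, ?_⟩
  · intro h
    have hw := congrFun h (.inr (Classical.arbitrary W))
    simp only [Sum.elim_inr, Pi.zero_apply, mul_eq_zero, sub_eq_zero] at hw
    tauto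
  · ext (v | w)
    · rw [aAlphaMatrix_top_gjoin_bot_mulVec_inl]
      simp only [Sum.elim_inl, Sum.elim_inr, Finset.sum_const, Finset.card_univ, nsmul_eq_mul,
        Pi.smul_apply, smul_eq_mul]
      linear_combination -hr
    · rw [aAlphaMatrix_top_gjoin_bot_mulVec_inr]
      simp only [Sum.elim_inl, Sum.elim_inr, Finset.sum_const, Finset.card_univ, nsmul_eq_mul,
        Pi.smul_apply, smul_eq_mul]
      ring

theorem quadratic_nonpos_of_mem_spectrum_aAlphaMatrix_top_gjoin_bot [Nonempty W] (hα : α ≤ 1)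
    {μ : ℝ}
    (hμ : μ ∈ spectrum ℝ (aAlphaMatrix α ((⊤ : SimpleGraph V) ∨g (⊥ : SimpleGraph W)))) :
    μ ^ 2 - Tr * μ + Det ≤ 0 := by
  obtain ⟨x, hx0, hx⟩ := Matrix.mem_spectrum_iff_exists_mulVec_eq_smul.mp hμ
  unfold quotientTrace quotientDet
  set s : ℝ := card V
  set t : ℝ := card W
  set a := ∑ v, x (.inl v)
  set b := ∑ w, x (.inr w)
  have eqL (v : V) : (μ - (α * (s + t) - 1)) * x (.inl v) = (1 - α) * (a + b) := by
    have h := congrFun hx (.inl v)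
    rw [aAlphaMatrix_top_gjoin_bot_mulVec_inl] at h
    simp only [Pi.smul_apply, smul_eq_mul] at h
    linear_combination -h
  have eqR (w : W) : (μ - α * s) * x (.inr w) = (1 - α) * a := by
    have h := congrFun hx (.inr w)
    rw [aAlphaMatrix_top_gjoin_bot_mulVec_inr] at h
    simp only [Pi.smul_apply, smul_eq_mul] at h
    linear_combination -h
  have sumL : (μ - (α * (s + t) - 1)) * a = s * ((1 - α) * (a + b)) := by
    simp [a, s, Finset.mul_sum, eqL]
  have sumR : (μ - α * s) * b = t * ((1 - α) * a) := by
    simp [b, t, Finset.mul_sum, eqR]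
  have ht : 1 ≤ t := Nat.one_le_cast.mpr card_pos
  have hs : 0 ≤ s := Nat.cast_nonneg _
  by_contra! hQ
  have hμ₁ : μ - (α * (s + t) - 1) ≠ 0 := by
    intro h
    rw [sub_eq_zero.mp h] at hQ
    -- `Q(α(s+t) - 1) = -(1-α)s(t-1)`
    nlinarith [mul_nonneg (mul_nonneg (sub_nonneg.mpr hα) hs) (sub_nonneg.mpr ht)]
  have hμ₂ : μ - α * s ≠ 0 := by
    intro h
    rw [sub_eq_zero.mp h] at hQ
    -- `Q(αs) = -(1-α)²st`
    nlinarith [mul_nonneg (mul_nonneg (sq_nonneg (1 - α)) hs) (by linarith : (0 : ℝ) ≤ t)]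
  have ha : a = 0 := by
    refine (mul_eq_zero.mp ?_).resolve_left hQ.ne'
    linear_combination (μ - α * s) * sumL + (1 - α) * s * sumR
  have hb : b = 0 := by
    refine (mul_eq_zero.mp ?_).resolve_left hQ.ne'
    linear_combination (1 - α) * t * sumL + (μ - (α * t + s - 1)) * sumR
  refine hx0 (funext fun u => ?_)
  cases u with
  | inl v => simpa [ha, hb, hμ₁] using eqL v
  | inr w => simpa [ha, hμ₂] using eqR w

theorem isGreatest_spectrum_aAlphaMatrix_top_gjoin_bot [Nonempty V] [Nonempty W] (hα : α < 1) :
    IsGreatest (spectrum ℝ (aAlphaMatrix α ((⊤ : SimpleGraph V) ∨g (⊥ : SimpleGraph W))))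
      (largestRoot Tr Det) :=
  ⟨mem_spectrum_aAlphaMatrix_top_gjoin_bot hα.ne
      (largestRoot_isRoot (quotient_discrim_nonneg _ _ _ (by positivity))),
    fun _ hμ =>
      le_largestRoot (quadratic_nonpos_of_mem_spectrum_aAlphaMatrix_top_gjoin_bot hα.le hμ)⟩

theorem rhoAlpha_top_gjoin_bot [Nonempty V] [Nonempty W] (hα : α < 1) :
    IsGreatest {x | x ^ 2 - Tr * x + Det = 0}
      (rhoAlpha α ((⊤ : SimpleGraph V) ∨g (⊥ : SimpleGraph W))) ∧
    rhoAlpha α ((⊤ : SimpleGraph V) ∨g (⊥ : SimpleGraph W)) = largestRoot Tr Det := by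
  have hρ : rhoAlpha α ((⊤ : SimpleGraph V) ∨g (⊥ : SimpleGraph W)) = largestRoot Tr Det :=
    (isGreatest_spectrum_aAlphaMatrix_top_gjoin_bot hα).csSup_eq
  exact ⟨hρ ▸ isGreatest_largestRoot (quotient_discrim_nonneg _ _ _ (by positivity)), hρ⟩

end Spectrum

theorem rhoAlpha_case22_general (α : ℝ) (hα1 : α < 1)
    (s n : ℕ) (hs : 1 ≤ s) (hn : n = s + 3 * s / 2 + 2) :
    IsGreatest {x : ℝ | x ^ 2 - (α * (n : ℝ) + (s : ℝ) - 1) * x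
        + (2 * α - 1) * (s : ℝ) * ((3 * s / 2 : ℕ) : ℝ)
        + α * (s : ℝ) ^ 2 + (3 * α - 2) * (s : ℝ) = 0}
      (rhoAlpha α ((⊤ : SimpleGraph (Fin s)) ∨g (⊥ : SimpleGraph (Fin (3 * s / 2 + 2))))) ∧
    rhoAlpha α ((⊤ : SimpleGraph (Fin s)) ∨g (⊥ : SimpleGraph (Fin (3 * s / 2 + 2)))) =
      (α * (n : ℝ) + (s : ℝ) - 1 +
        Real.sqrt ((α * (n : ℝ) + (s : ℝ) - 1) ^ 2
          - 4 * ((2 * α - 1) * (s : ℝ) * ((3 * s / 2 : ℕ) : ℝ)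
            + α * (s : ℝ) ^ 2 + 3 * α * (s : ℝ) - 2 * (s : ℝ)))) / 2 := by
  have : Nonempty (Fin s) := ⟨⟨0, hs⟩⟩
  have hTr : quotientTrace α s ((3 * s / 2 + 2 : ℕ) : ℝ) = α * n + s - 1 := by
    rw [quotientTrace, hn]; push_cast; ring
  have hDet : quotientDet α s ((3 * s / 2 + 2 : ℕ) : ℝ)
      = (2 * α - 1) * s * ((3 * s / 2 : ℕ) : ℝ) + α * s ^ 2 + 3 * α * s - 2 * s := by
    rw [quotientDet]; push_cast; ring
  obtain ⟨hmax, hρ⟩ := rhoAlpha_top_gjoin_bot (V := Fin s) (W := Fin (3 * s / 2 + 2)) hα1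
  simp only [Fintype.card_fin, hTr, hDet] at hmax hρ
  refine ⟨?_, hρ⟩
  convert hmax using 4
  ring

theorem rhoAlpha_case22 (α : ℝ) (hα0 : 0 ≤ α) (hα1 : α < 1)
    (s n : ℕ) (hs : 1 ≤ s) (hn : n = s + 3 * s / 2 + 2) :
    IsGreatest {x : ℝ | x ^ 2 - (α * (n : ℝ) + (s : ℝ) - 1) * x
        + (2 * α - 1) * (s : ℝ) * ((3 * s / 2 : ℕ) : ℝ)
        + α * (s : ℝ) ^ 2 + (3 * α - 2) * (s : ℝ) = 0}
      (rhoAlpha α ((⊤ : SimpleGraph (Fin s)) ∨g (⊥ : SimpleGraph (Fin (3 * s / 2 + 2))))) ∧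
    rhoAlpha α ((⊤ : SimpleGraph (Fin s)) ∨g (⊥ : SimpleGraph (Fin (3 * s / 2 + 2)))) =
      (α * (n : ℝ) + (s : ℝ) - 1 +
        Real.sqrt ((α * (n : ℝ) + (s : ℝ) - 1) ^ 2
          - 4 * ((2 * α - 1) * (s : ℝ) * ((3 * s / 2 : ℕ) : ℝ)
            + α * (s : ℝ) ^ 2 + 3 * α * (s : ℝ) - 2 * (s : ℝ)))) / 2 :=
  rhoAlpha_case22_general α hα1 s n hs hn
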